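/- If n > k², then the burning number of the Johnson graph J(n,k) equals k + 1. -/

import Mathlib

open Finset

/-- A burning sequence of length `b`: vertex `v i` is burned at time `i+1`,
so it covers the ball of radius `b - (i+1)` by time `b`. -/
def IsBurningSeq {V : Type*} (G : SimpleGraph V) {b : ℕ} (v : Fin b → V) : Prop :=
  ∀ x : V, ∃ i : Fin b, G.dist (v i) x ≤ b - 1 - (i : ℕ)

/-- The burning number of a graph: the least length of a burning sequence. -/
noncomputable def burningNumber {V : Type*} (G : SimpleGraph V) : ℕ :=
  sInf {b | ∃ v : Fin b → V, IsBurningSeq G v}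

/-- The hypercube graph `Q_n` on `{0,1}^n`: adjacency is Hamming distance one. -/
def cubeGraph (n : ℕ) : SimpleGraph (Fin n → Bool) where
  Adj x y := hammingDist x y = 1
  symm := ⟨fun x y h => by rwa [hammingDist_comm]⟩
  loopless := ⟨fun x h => by simp [hammingDist_self] at h⟩

/-- The Hamming graph `H(n,q)` on `[q]^n`: adjacency is Hamming distance one. -/
def hammingGraph (n q : ℕ) : SimpleGraph (Fin n → Fin q) where
  Adj x y := hammingDist x y = 1
  symm := ⟨fun x y h => by rwa [hammingDist_comm]⟩
  loopless := ⟨fun x h => by simp [hammingDist_self] at h⟩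

/-- The Johnson graph `J(n,k)` on `k`-subsets of `[n]`. -/
def johnsonGraph (n k : ℕ) : SimpleGraph {s : Finset (Fin n) // s.card = k} where
  Adj u v := u ≠ v ∧ (u.1 ∩ v.1).card = k - 1
  symm := ⟨by rintro u v ⟨h1, h2⟩; exact ⟨h1.symm, by rwa [Finset.inter_comm]⟩⟩
  loopless := ⟨by rintro u ⟨h1, -⟩; exact h1 rfl⟩

/-- The halved `n`-cube on even-weight vectors of `F₂^n`: adjacency is Hamming distance two. -/
def halvedCubeGraph (n : ℕ) : SimpleGraph {x : Fin n → ZMod 2 // ∑ i, x i = 0} where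
  Adj x y := hammingDist x.1 y.1 = 2
  symm := ⟨fun x y h => by rwa [hammingDist_comm]⟩
  loopless := ⟨fun x h => by simp [hammingDist_self] at h⟩

/-- The cycle `C_n` on `ℤ_n`. -/
def cycleGraphZMod (n : ℕ) : SimpleGraph (ZMod n) where
  Adj x y := x ≠ y ∧ (x - y = 1 ∨ y - x = 1)
  symm := ⟨by rintro x y ⟨h1, h2⟩; exact ⟨h1.symm, h2.symm⟩⟩
  loopless := ⟨by rintro x ⟨h1, -⟩; exact h1 rfl⟩

/-!
In `J(n,k)` the distance from `u` to `w` is `#(u \ w)`, so every vertex is within distance `k`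
of any fixed vertex and one source burns the whole graph in `k + 1` rounds. Conversely, given
`b ≤ k` sources `v 0, …, v (b-1)`, build a `k`-set `x` greedily, its `j`-th element avoiding the
previous ones and every `v i` with `i + j < b`. At most `j + (b - j) k ≤ k² < n` points are
forbidden at step `j`, and the resulting `x` satisfies `#(v i \ x) ≥ b - i`, so it is not burned
in time.
-/

section Burning

variable {V : Type*} {G : SimpleGraph V}

lemma isBurningSeq_const (u : V) {d : ℕ} (hd : ∀ x, G.dist u x ≤ d) :
    IsBurningSeq G (fun _ : Fin (d + 1) ↦ u) :=
  fun x ↦ ⟨0, by simpa using hd x⟩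

lemma burningNumber_eq {b : ℕ} (v : Fin b → V) (hv : IsBurningSeq G v)
    (hlt : ∀ c < b, ∀ w : Fin c → V, ¬IsBurningSeq G w) : burningNumber G = b :=
  le_antisymm (Nat.sInf_le ⟨v, hv⟩) <|
    le_csInf ⟨b, v, hv⟩ fun c ⟨w, hw⟩ ↦ not_lt.1 fun hc ↦ hlt c hc w hw

end Burning

section Greedy

variable {α : Type*} [Fintype α] [DecidableEq α]

lemma exists_card_eq_forall_card_inter_le {b k : ℕ} (v : Fin b → Finset α)
    (hv : ∀ i, #(v i) ≤ k) :
    ∀ m, (∀ j < m, j + (b - j) * k < Fintype.card α) →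
      ∃ x : Finset α, #x = m ∧ ∀ i : Fin b, #(x ∩ v i) ≤ m - (b - i)
  | 0, _ => ⟨∅, by simp⟩
  | m + 1, hm => by
    obtain ⟨x, hx, hxv⟩ := exists_card_eq_forall_card_inter_le v hv m fun j hj ↦ hm j (by omega)
    set early : Finset (Fin b) := {i | (i : ℕ) + m < b}
    have h_early : #early = b - m := by
      rw [show early = ({i | (i : ℕ) < b - m} : Finset (Fin b)) by ext; simp [early]; omega,
        Fin.card_filter_val_lt]
      omega
    have h_forbidden : #(x ∪ early.biUnion v) < Fintype.card α :=
      calc #(x ∪ early.biUnion v) ≤ m + (b - m) * k := by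
            grw [card_union_le, hx, card_biUnion_le_card_mul _ _ k fun i _ ↦ hv i, h_early]
        _ < Fintype.card α := hm m m.lt_succ_self
    obtain ⟨a, ha⟩ : (x ∪ early.biUnion v)ᶜ.Nonempty := by
      rw [← card_pos, card_compl]; omega
    simp only [mem_compl, mem_union, mem_biUnion, not_or, not_exists, not_and] at ha
    refine ⟨insert a x, by rw [card_insert_of_notMem ha.1, hx], fun i ↦ ?_⟩
    have := hxv i
    by_cases hai : a ∈ v i
    · have : b ≤ i + m := by simpa [early] using mt (ha.2 i) (not_not.2 hai)
      grw [insert_inter_of_mem hai, card_insert_le]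
      omega
    · rw [insert_inter_of_notMem hai]
      omega

lemma exists_card_eq_forall_card_inter_add_le {b k : ℕ} (hb : b ≤ k) (hk : k ^ 2 < Fintype.card α) (v : Fin b → Finset α) (hv : ∀ i, #(v i) ≤ k) :
    ∃ x : Finset α, #x = k ∧ ∀ i : Fin b, #(x ∩ v i) + (b - i) ≤ k := by
  have hroom : ∀ j < k, j + (b - j) * k < Fintype.card α := fun j hj ↦
    calc j + (b - j) * k ≤ j * k + (k - j) * k := by
          gcongr
          exact Nat.le_mul_of_pos_right j (by omega)
        _ = k ^ 2 := by rw [← add_mul, Nat.add_sub_cancel' hj.le, sq]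
        _ < Fintype.card α := hk
  obtain ⟨x, hx, hxv⟩ := exists_card_eq_forall_card_inter_le v hv k hroom
  exact ⟨x, hx, fun i ↦ by have := hxv i; have := i.isLt; omega⟩

end Greedy

section Johnson

variable {n k : ℕ}

lemma johnsonGraph_card_sdiff_of_adj {u y : {s : Finset (Fin n) // #s = k}}
    (h : (johnsonGraph n k).Adj u y) : #(u.1 \ y.1) = 1 := by
  have hne : (u.1 \ y.1).Nonempty := sdiff_nonempty.2 fun hsub ↦
    h.1 <| Subtype.ext <| eq_of_subset_of_card_le hsub (by rw [u.2, y.2])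
  have := card_sdiff_add_card_inter u.1 y.1
  have := hne.card_pos
  rw [u.2, h.2] at *
  omega

lemma johnsonGraph_card_sdiff_le_length {u w : {s : Finset (Fin n) // #s = k}}
    (p : (johnsonGraph n k).Walk u w) : #(u.1 \ w.1) ≤ p.length := by
  induction p with
  | nil => simp
  | @cons u y w h p ih =>
    calc #(u.1 \ w.1) ≤ #(u.1 \ y.1 ∪ y.1 \ w.1) := card_le_card (sdiff_triangle _ _ _)
      _ ≤ #(u.1 \ y.1) + #(y.1 \ w.1) := card_union_le _ _
      _ ≤ (p.cons h).length := by
        rw [johnsonGraph_card_sdiff_of_adj h, SimpleGraph.Walk.length_cons]; omega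

/-- Exchanging an element of `u \ w` for one of `w \ u` moves one step closer to `w`. -/
lemma johnsonGraph_exists_adj_card_sdiff {u w : {s : Finset (Fin n) // #s = k}} {c : ℕ}
    (hc : #(u.1 \ w.1) = c + 1) :
    ∃ y, (johnsonGraph n k).Adj u y ∧ #(y.1 \ w.1) = c := by
  obtain ⟨a, ha⟩ : (u.1 \ w.1).Nonempty := by rw [← card_pos, hc]; omega
  obtain ⟨e, he⟩ : (w.1 \ u.1).Nonempty := by
    rw [← card_pos, card_sdiff_comm (w.2.trans u.2.symm), hc]; omega
  rw [mem_sdiff] at ha he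
  have he' : e ∉ u.1.erase a := fun h ↦ he.2 (mem_of_mem_erase h)
  have hk : 1 ≤ k := u.2 ▸ card_pos.2 ⟨a, ha.1⟩
  refine ⟨⟨insert e (u.1.erase a), ?_⟩, ⟨fun huy ↦ ?_, ?_⟩, ?_⟩
  · rw [card_insert_of_notMem he', card_erase_of_mem ha.1, u.2]; omega
  · have hay : a ∉ insert e (u.1.erase a) := by
      simp [show a ≠ e by rintro rfl; exact ha.2 he.1]
    exact hay (huy ▸ ha.1 : a ∈ (⟨_, _⟩ : {s : Finset (Fin n) // #s = k}).1)
  · rw [inter_insert_of_notMem he.2, inter_eq_right.2 (erase_subset a u.1),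
      card_erase_of_mem ha.1, u.2]
  · rw [insert_sdiff_of_mem _ he.1, erase_sdiff_comm, card_erase_of_mem (mem_sdiff.2 ha), hc]
    rfl

lemma johnsonGraph_exists_walk_length_eq (u w : {s : Finset (Fin n) // #s = k}) :
    ∃ p : (johnsonGraph n k).Walk u w, p.length = #(u.1 \ w.1) := by
  generalize hc : #(u.1 \ w.1) = c
  induction c generalizing u with
  | zero =>
    obtain rfl : u = w := Subtype.ext <|
      eq_of_subset_of_card_le (sdiff_eq_empty_iff_subset.1 (card_eq_zero.1 hc)) (by rw [u.2, w.2])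
    exact ⟨.nil, rfl⟩
  | succ c ih =>
    obtain ⟨y, huy, hy⟩ := johnsonGraph_exists_adj_card_sdiff hc
    obtain ⟨p, hp⟩ := ih y hy
    exact ⟨.cons huy p, by rw [SimpleGraph.Walk.length_cons, hp]⟩

lemma johnsonGraph_dist (u w : {s : Finset (Fin n) // #s = k}) :
    (johnsonGraph n k).dist u w = #(u.1 \ w.1) := by
  obtain ⟨p, hp⟩ := johnsonGraph_exists_walk_length_eq u w
  obtain ⟨q, hq⟩ := SimpleGraph.Reachable.exists_walk_length_eq_dist ⟨p⟩
  exact le_antisymm (hp ▸ SimpleGraph.dist_le p) (hq ▸ johnsonGraph_card_sdiff_le_length q)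

end Johnson

lemma johnsonGraph_not_isBurningSeq {n k b : ℕ} (hb : b ≤ k) (hn : k ^ 2 < n)
    (v : Fin b → {s : Finset (Fin n) // #s = k}) : ¬IsBurningSeq (johnsonGraph n k) v := by
  obtain ⟨x, hx, hxv⟩ := exists_card_eq_forall_card_inter_add_le hb (by simpa using hn)
    (fun i ↦ (v i).1) fun i ↦ (v i).2.le
  intro hv
  obtain ⟨i, hi⟩ := hv ⟨x, hx⟩
  have hk : #((v i).1 \ x) + #(x ∩ (v i).1) = k := by
    rw [inter_comm, card_sdiff_add_card_inter, (v i).2]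
  rw [johnsonGraph_dist] at hi
  change #((v i).1 \ x) ≤ b - 1 - i at hi
  have := hxv i
  have := i.isLt
  omega

theorem johnson_burningNumber_of_large_general (n k : ℕ) (hn : k ^ 2 < n) :
    burningNumber (johnsonGraph n k) = k + 1 := by
  obtain ⟨s, -, hs⟩ := exists_subset_card_eq (s := (univ : Finset (Fin n)))
    (by simpa using (Nat.le_self_pow two_ne_zero k).trans hn.le)
  refine burningNumber_eq _ (isBurningSeq_const ⟨s, hs⟩ fun x ↦ ?_)
    fun c hc v ↦ johnsonGraph_not_isBurningSeq (by omega) hn v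
  rw [johnsonGraph_dist]
  exact (card_le_card sdiff_subset).trans_eq hs

/-- If `n > k²`, then `burn(J(n,k)) = k + 1`. -/
theorem johnson_burningNumber_of_large (n k : ℕ) (hk : 1 ≤ k) (hn : k ^ 2 < n) :
    burningNumber (johnsonGraph n k) = k + 1 :=
  johnson_burningNumber_of_large_general n k hn
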